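/- arXiv:0811.1561 — 3 statements merged into one kernel-verified Lean document; each statement's English description precedes it below -/
import Mathlib

section
/- Let x : ℕ → ℝ satisfy the order-n recurrence x(t+n) = Σ_{j=1}^{n} aⱼ x(t+n−j) and suppose x satisfies no linear recurrence of order strictly less than n with constant coefficients. Then the Hankel-type linear system expressing the recurrence, namely the n×n matrix H with entries H(i,j) = x(i+j) for 0 ≤ i, j ≤ n−1, is invertible; consequently the coefficients a₁,…,aₙ are uniquely determined by the sequence x. -/
/-!
If the Hankel matrix had a nonzero kernel vector `v`, the sequence `t ↦ ∑ j, v j * x (t + j)`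
would solve the same recurrence as `x` and vanish on its first `n` terms, hence vanish identically;
dividing this relation by its last nonzero coefficient gives a recurrence of order `< n`.
For an invertible Hankel matrix, the reversed coefficient vector is the unique solution of the
linear system that the recurrence writes down for `t < n`.
-/

open Finset Matrix

def Matrix.hankel {R : Type*} (x : ℕ → R) (n : ℕ) : Matrix (Fin n) (Fin n) R :=
  of fun i j => x (i + j)

namespace LinearRecurrence

section CommSemiring

variable {R : Type*} [CommSemiring R]

/-- `LinearRecurrence` indexes coefficients by the shift `i`, the recurrence
`x (t + n) = ∑ j ∈ Icc 1 n, a j * x (t + n - j)` by the lag `j = n - i`. -/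
def ofCoeffs (n : ℕ) (a : ℕ → R) : LinearRecurrence R :=
  ⟨n, fun i => a (n - i)⟩

theorem isSolution_ofCoeffs_iff (n : ℕ) (a x : ℕ → R) :
    (ofCoeffs n a).IsSolution x ↔ ∀ t, x (t + n) = ∑ j ∈ Icc 1 n, a j * x (t + n - j) := by
  suffices h : ∀ t,
      ∑ j ∈ Icc 1 n, a j * x (t + n - j) = ∑ i : Fin n, a (n - i) * x (t + i) by
    simp only [h]; rfl
  intro t
  rw [Fin.sum_univ_eq_sum_range (fun i => a (n - i) * x (t + i))]
  refine sum_nbij' (n - ·) (n - ·) ?_ ?_ ?_ ?_ ?_ <;> intro j hj <;>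
    simp only [mem_Icc, mem_range] at hj ⊢
  on_goal 5 => rw [Nat.sub_sub_self hj.2, Nat.add_sub_assoc hj.2]
  all_goals omega

theorem exists_ofCoeffs_eq (E : LinearRecurrence R) : ∃ a, ofCoeffs E.order a = E := by
  refine ⟨fun j => Function.extend Fin.val E.coeffs 0 (E.order - j), ?_⟩
  obtain ⟨n, c⟩ := E
  simp only [ofCoeffs, mk.injEq, heq_eq_eq, true_and]
  funext i
  rw [Nat.sub_sub_self i.is_le', Fin.val_injective.extend_apply]

variable {E : LinearRecurrence R} {u : ℕ → R}

theorem IsSolution.shift (hu : E.IsSolution u) (k : ℕ) : E.IsSolution fun t => u (t + k) := by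
  intro t
  simp only [add_right_comm t _ k]
  exact hu (t + k)

theorem IsSolution.sum_mul_shift {m : ℕ} (hu : E.IsSolution u) (v : Fin m → R) :
    E.IsSolution fun t => ∑ j, v j * u (t + j) := by
  rw [is_sol_iff_mem_solSpace]
  convert E.solSpace.sum_mem (t := univ) fun j _ => E.solSpace.smul_mem (v j)
    ((E.is_sol_iff_mem_solSpace _).mp (hu.shift j)) using 1
  ext t
  simp

theorem IsSolution.hankel_mulVec_coeffs (hu : E.IsSolution u) :
    hankel u E.order *ᵥ E.coeffs = fun i : Fin E.order => u (i + E.order) := by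
  funext i
  simp [hankel, mulVec, dotProduct, hu i, mul_comm]

theorem IsSolution.sum_mul_eq_zero_of_hankel_mulVec_eq_zero (hu : E.IsSolution u)
    {v : Fin E.order → R} (hv : hankel u E.order *ᵥ v = 0) (t : ℕ) :
    ∑ j, v j * u (t + j) = 0 := by
  have hzero : (fun t => ∑ j, v j * u (t + j)) = 0 := by
    rw [E.eq_iff_eqOn_range_order _ _ (hu.sum_mul_shift v) E.solSpace.zero_mem]
    intro i hi
    have := congrFun hv ⟨i, mem_range.mp hi⟩
    simpa [hankel, mulVec, dotProduct, mul_comm] using this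
  exact congrFun hzero t

end CommSemiring

section Field

variable {K : Type*} [Field K] {x : ℕ → K}

theorem exists_isSolution_order_lt_of_sum_mul_eq_zero {n : ℕ} (v : Fin n → K) (hv : v ≠ 0)
    (hrel : ∀ t, ∑ j, v j * x (t + j) = 0) :
    ∃ E : LinearRecurrence K, E.order < n ∧ E.IsSolution x := by
  induction n with
  | zero => exact absurd (Subsingleton.elim v 0) hv
  | succ k ih =>
    by_cases hlast : v (Fin.last k) = 0
    · have hinit : v ∘ Fin.castSucc ≠ 0 := by
        refine fun h => hv (funext fun j => Fin.lastCases hlast (fun i => ?_) j)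
        exact congrFun h i
      obtain ⟨E, hE, hsol⟩ := ih _ hinit fun t => by
        simpa [Fin.sum_univ_castSucc, hlast] using hrel t
      exact ⟨E, hE.trans k.lt_succ_self, hsol⟩
    · refine ⟨⟨k, fun i => -v i.castSucc / v (Fin.last k)⟩, k.lt_succ_self, fun t => ?_⟩
      have h := hrel t
      rw [Fin.sum_univ_castSucc, ← eq_neg_iff_add_eq_zero] at h
      simp only [Fin.val_last, Fin.val_castSucc] at h
      simp_rw [div_mul_eq_mul_div, ← sum_div, neg_mul, sum_neg_distrib, h, neg_neg,
        mul_div_cancel_left₀ _ hlast]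

theorem IsSolution.det_hankel_ne_zero {E : LinearRecurrence K} (hx : E.IsSolution x)
    (hmin : ∀ E' : LinearRecurrence K, E'.order < E.order → ¬ E'.IsSolution x) :
    (hankel x E.order).det ≠ 0 := by
  intro hdet
  obtain ⟨v, hv, hker⟩ := exists_mulVec_eq_zero_iff.mpr hdet
  obtain ⟨E', hlt, hE'⟩ := exists_isSolution_order_lt_of_sum_mul_eq_zero v hv
    (hx.sum_mul_eq_zero_of_hankel_mulVec_eq_zero hker)
  exact hmin E' hlt hE'

theorem coeffs_eq_of_det_hankel_ne_zero {n : ℕ} {a a' : ℕ → K}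
    (hdet : (hankel x n).det ≠ 0) (hx : (ofCoeffs n a).IsSolution x)
    (hx' : (ofCoeffs n a').IsSolution x) : ∀ j ∈ Icc 1 n, a j = a' j := by
  have hinj := mulVec_injective_iff_isUnit.mpr
    ((isUnit_iff_isUnit_det _).mpr hdet.isUnit)
  have hcoeffs : (ofCoeffs n a).coeffs = (ofCoeffs n a').coeffs :=
    hinj (hx.hankel_mulVec_coeffs.trans hx'.hankel_mulVec_coeffs.symm)
  intro j hj
  obtain ⟨hj1, hjn⟩ := mem_Icc.mp hj
  simpa [ofCoeffs, Nat.sub_sub_self hjn] using congrFun hcoeffs ⟨n - j, show n - j < n by omega⟩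

end Field

end LinearRecurrence

open LinearRecurrence in
/-- If `x` satisfies an order-`n` recurrence but none of strictly smaller order, then the
`n × n` Hankel matrix `(x(i+j))` is invertible, and the recurrence coefficients are
uniquely determined by `x`. -/
theorem stmt11 (x : ℕ → ℝ) (n : ℕ) (a : ℕ → ℝ)
    (hrec : ∀ t : ℕ, x (t + n) = ∑ j ∈ Finset.Icc 1 n, a j * x (t + n - j))
    (hmin : ∀ m < n, ¬ ∃ c : ℕ → ℝ,
      ∀ t : ℕ, x (t + m) = ∑ j ∈ Finset.Icc 1 m, c j * x (t + m - j)) :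
    (Matrix.of fun i j : Fin n => x (i + j)).det ≠ 0 ∧
    ∀ a' : ℕ → ℝ,
      (∀ t : ℕ, x (t + n) = ∑ j ∈ Finset.Icc 1 n, a' j * x (t + n - j)) →
      ∀ j ∈ Finset.Icc 1 n, a j = a' j := by
  have hx := (isSolution_ofCoeffs_iff n a x).mpr hrec
  have hdet : (hankel x n).det ≠ 0 := hx.det_hankel_ne_zero fun E hE hsol => by
    obtain ⟨c, hc⟩ := exists_ofCoeffs_eq E
    rw [← hc] at hsol
    exact hmin _ hE ⟨c, (isSolution_ofCoeffs_iff _ c x).mp hsol⟩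
  exact ⟨hdet, fun a' hrec' =>
    coeffs_eq_of_det_hankel_ne_zero hdet hx ((isSolution_ofCoeffs_iff n a' x).mpr hrec')⟩
end

section
/- Let x : ℕ → ℝ satisfy an order-n linear recurrence with coefficients a₁,…,aₙ and no recurrence of any order strictly less than n. Then the full parameter vector (a₁,…,aₙ, x(0),…,x(n−1)) — equivalently (a₁,…,aₙ) together with the numerator coefficients b₀,…,b_{n−1} of the generating function — is uniquely determined by the sequence x. -/
/-!
If `a ≠ a'`, subtracting the two recurrences gives a relation
`∑ (a j - a' j) * x (t + n - j) = 0`; dividing by its first nonzero coefficient, at some index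
`k ≥ 1`, turns it into a recurrence of order `n - k < n`, contradicting minimality. Once `a = a'`
the denominators `Q` agree, and `P = Q * X` is determined by `x`.
-/

open Finset

theorem Finset.sum_Icc_eq_add_sum_Icc_shift {M : Type*} [AddCommMonoid M] (f : ℕ → M)
    {k n : ℕ} (hkn : k ≤ n) :
    ∑ j ∈ Icc k n, f j = f k + ∑ i ∈ Icc 1 (n - k), f (k + i) := by
  obtain ⟨m, rfl⟩ := Nat.exists_eq_add_of_le hkn
  rw [Icc_eq_cons_Ioc hkn, sum_cons, ← Icc_add_one_left_eq_Ioc, Nat.add_sub_cancel_left,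
    ← map_add_left_Icc, sum_map]
  rfl

variable {R : Type*}

def SatisfiesRecurrence [Semiring R] (x : ℕ → R) (m : ℕ) (c : ℕ → R) : Prop :=
  ∀ t, x (t + m) = ∑ j ∈ Icc 1 m, c j * x (t + m - j)

theorem SatisfiesRecurrence.sum_sub_mul_eq_zero [CommRing R] {x : ℕ → R} {n : ℕ} {c c' : ℕ → R}
    (h : SatisfiesRecurrence x n c) (h' : SatisfiesRecurrence x n c') (t : ℕ) :
    ∑ j ∈ Icc 1 n, (c j - c' j) * x (t + n - j) = 0 := by
  simp only [sub_mul, sum_sub_distrib, ← h t, ← h' t, sub_self]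

theorem satisfiesRecurrence_of_sum_mul_eq_zero [Field R] {x : ℕ → R} {n k : ℕ} {d : ℕ → R}
    (hk : 1 ≤ k) (hkn : k ≤ n) (hdk : d k ≠ 0) (hd : ∀ j ∈ Icc 1 n, j < k → d j = 0)
    (h : ∀ t, ∑ j ∈ Icc 1 n, d j * x (t + n - j) = 0) :
    SatisfiesRecurrence x (n - k) fun i => -d (k + i) / d k := by
  intro t
  have htail : ∑ j ∈ Icc 1 n, d j * x (t + n - j) = ∑ j ∈ Icc k n, d j * x (t + n - j) := by
    refine (sum_subset (Icc_subset_Icc_left hk) fun j hj hjk => ?_).symm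
    rw [hd j hj (by rw [mem_Icc] at hj hjk; omega), zero_mul]
  have hrel := h t
  rw [htail, sum_Icc_eq_add_sum_Icc_shift _ hkn] at hrel
  have hidx : ∀ i ∈ Icc 1 (n - k), t + n - (k + i) = t + (n - k) - i := fun i _ => by omega
  rw [sum_congr rfl fun i hi => by rw [hidx i hi], show t + n - k = t + (n - k) by omega] at hrel
  simp only [neg_div, neg_mul, sum_neg_distrib, div_mul_eq_mul_div, ← sum_div]
  field_simp
  linear_combination hrel

theorem SatisfiesRecurrence.coeff_eq_of_minimal [Field R] {x : ℕ → R} {n : ℕ} {c c' : ℕ → R}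
    (h : SatisfiesRecurrence x n c) (h' : SatisfiesRecurrence x n c')
    (hmin : ∀ m < n, ¬ ∃ e, SatisfiesRecurrence x m e) :
    ∀ j ∈ Icc 1 n, c j = c' j := by
  by_contra! hne
  classical
  let k := Nat.find hne
  obtain ⟨hk, hck⟩ : k ∈ Icc 1 n ∧ c k ≠ c' k := Nat.find_spec hne
  have hlow : ∀ j ∈ Icc 1 n, j < k → c j - c' j = 0 := fun j hj hjk =>
    sub_eq_zero.mpr <| not_not.mp fun hcj => Nat.find_min hne hjk ⟨hj, hcj⟩
  rw [mem_Icc] at hk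
  exact hmin (n - k) (by omega) ⟨_, satisfiesRecurrence_of_sum_mul_eq_zero hk.1 hk.2
    (sub_ne_zero.mpr hck) hlow (h.sum_sub_mul_eq_zero h')⟩

/-- Linear identifiability (Theorem 2 of the paper): for a sequence of minimal order `n`,
the recurrence coefficients, the initial data, and the numerator of the rational
generating function are all uniquely determined by the sequence. -/
theorem stmt12 (x : ℕ → ℝ) (n : ℕ) (a a' : ℕ → ℝ)
    (hrec : ∀ t : ℕ, x (t + n) = ∑ j ∈ Finset.Icc 1 n, a j * x (t + n - j))
    (hrec' : ∀ t : ℕ, x (t + n) = ∑ j ∈ Finset.Icc 1 n, a' j * x (t + n - j))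
    (hmin : ∀ m < n, ¬ ∃ c : ℕ → ℝ,
      ∀ t : ℕ, x (t + m) = ∑ j ∈ Finset.Icc 1 m, c j * x (t + m - j)) :
    (∀ j ∈ Finset.Icc 1 n, a j = a' j) ∧
    ∀ P P' : Polynomial ℝ,
      (((1 - ∑ j ∈ Finset.Icc 1 n, Polynomial.C (a j) * Polynomial.X ^ j :
          Polynomial ℝ)) : PowerSeries ℝ) * PowerSeries.mk x = (P : PowerSeries ℝ) →
      (((1 - ∑ j ∈ Finset.Icc 1 n, Polynomial.C (a' j) * Polynomial.X ^ j :
          Polynomial ℝ)) : PowerSeries ℝ) * PowerSeries.mk x = (P' : PowerSeries ℝ) →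
      P = P' := by
  have hcoeff := SatisfiesRecurrence.coeff_eq_of_minimal hrec hrec' hmin
  refine ⟨hcoeff, fun P P' hP hP' => Polynomial.coe_inj.mp ?_⟩
  rw [← hP, ← hP', sum_congr rfl fun j hj => by rw [hcoeff j hj]]
end

section
/- Let x : ℕ → ℝ satisfy no linear recurrence of order < n but an order-n recurrence. Then the map sending (a₁,…,aₙ) ∈ ℝⁿ to the sequence t ↦ x(t+n) − Σⱼ aⱼ x(t+n−j), t ∈ ℕ, is injective; equivalently, the vectors v_t = (x(t+n−1), …, x(t)) ∈ ℝⁿ, t ∈ ℕ, span ℝⁿ. -/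
open Finset

/-- If `x` satisfies an order-`n` recurrence but none of strictly smaller order, then the
regressor vectors `v_t = (x(t+n-1), …, x(t)) ∈ ℝⁿ`, `t ∈ ℕ`, span all of `ℝⁿ`; this makes
the linear identification of the recurrence coefficients well posed. -/
theorem stmt19 (x : ℕ → ℝ) (n : ℕ) (a : ℕ → ℝ)
    (hrec : ∀ t : ℕ, x (t + n) = ∑ j ∈ Finset.Icc 1 n, a j * x (t + n - j))
    (hmin : ∀ m < n, ¬ ∃ c : ℕ → ℝ,
      ∀ t : ℕ, x (t + m) = ∑ j ∈ Finset.Icc 1 m, c j * x (t + m - j)) :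
    Submodule.span ℝ
      (Set.range fun t : ℕ => (fun j : Fin n => x (t + n - 1 - (j : ℕ)))) = ⊤ := by
  by_contra hne
  rcases Nat.eq_zero_or_pos n with hn0 | hn
  · subst hn0
    exact hne (Subsingleton.elim _ _)
  obtain ⟨φ, φne, hφ⟩ := Submodule.exists_dual_map_eq_bot_of_lt_top
    (lt_top_iff_ne_top.mpr hne) inferInstance
  -- the coefficient vector of φ, as a function on ℕ
  set d : ℕ → ℝ := fun j => φ (fun k : Fin n => if (j : ℕ) = (k : ℕ) then 1 else 0) with hd
  have hφ0 : ∀ v ∈ Submodule.span ℝ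
      (Set.range fun t : ℕ => (fun j : Fin n => x (t + n - 1 - (j : ℕ)))), φ v = 0 := by
    intro v hv
    have : φ v ∈ (Submodule.span ℝ
        (Set.range fun t : ℕ => (fun j : Fin n => x (t + n - 1 - (j : ℕ))))).map φ :=
      Submodule.mem_map_of_mem hv
    rw [hφ] at this
    simpa using this
  -- the key linear relation
  have hrel : ∀ t : ℕ, ∑ j ∈ Finset.range n, d j * x (t + n - 1 - j) = 0 := by
    intro t
    have h1 : φ (fun j : Fin n => x (t + n - 1 - (j : ℕ))) = 0 :=
      hφ0 _ (Submodule.subset_span ⟨t, rfl⟩)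
    rw [LinearMap.pi_apply_eq_sum_univ] at h1
    have h2 : ∑ i : Fin n, x (t + n - 1 - (i : ℕ)) •
        φ (fun j : Fin n => if i = j then 1 else 0) =
        ∑ j ∈ Finset.range n, d j * x (t + n - 1 - j) := by
      rw [Finset.sum_range fun j => d j * x (t + n - 1 - j)]
      refine Finset.sum_congr rfl fun i _ => ?_
      have : (fun j : Fin n => if i = j then (1:ℝ) else 0) =
          (fun k : Fin n => if ((i : ℕ) : ℕ) = (k : ℕ) then 1 else 0) := by
        funext k
        simp [Fin.ext_iff]
      rw [smul_eq_mul, mul_comm, this]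
    rw [h2] at h1
    exact h1
  -- d is nonzero somewhere below n
  have hdex : ∃ j, d j ≠ 0 := by
    by_contra hall
    push_neg at hall
    apply φne
    apply LinearMap.ext
    intro y
    rw [LinearMap.pi_apply_eq_sum_univ, LinearMap.zero_apply]
    refine Finset.sum_eq_zero fun i _ => ?_
    have : (fun j : Fin n => if i = j then (1:ℝ) else 0) =
        (fun k : Fin n => if ((i : ℕ) : ℕ) = (k : ℕ) then 1 else 0) := by
      funext k
      simp [Fin.ext_iff]
    rw [this]
    have := hall (i : ℕ)
    rw [hd] at this
    simp only [this, smul_zero]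
  classical
  let j0 := Nat.find hdex
  have hj0 : d j0 ≠ 0 := Nat.find_spec hdex
  have hj0min : ∀ j < j0, d j = 0 := by
    intro j hj
    by_contra h
    exact absurd hj (not_lt.mpr (Nat.find_le h))
  have hj0lt : j0 < n := by
    by_contra h
    push_neg at h
    apply hj0
    have hz : (fun k : Fin n => if (j0 : ℕ) = (k : ℕ) then (1:ℝ) else 0) = 0 := by
      funext k
      have : (j0 : ℕ) ≠ (k : ℕ) := by omega
      simp [this]
    show φ (fun k : Fin n => if (j0 : ℕ) = (k : ℕ) then 1 else 0) = 0
    rw [hz, map_zero]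
  set m := n - 1 - j0 with hm
  have hmlt : m < n := by omega
  apply hmin m hmlt
  refine ⟨fun i => -d (j0 + i) / d j0, fun t => ?_⟩
  have key := hrel t
  -- split range n = Ico 0 j0 ∪ Ico j0 n; lower part vanishes
  have hsplit : ∑ j ∈ Finset.range n, d j * x (t + n - 1 - j) =
      ∑ j ∈ Finset.Ico j0 n, d j * x (t + n - 1 - j) := by
    rw [Finset.range_eq_Ico, ← Finset.sum_Ico_consecutive _ (Nat.zero_le j0) (le_of_lt hj0lt)]
    have : ∑ j ∈ Finset.Ico 0 j0, d j * x (t + n - 1 - j) = 0 :=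
      Finset.sum_eq_zero fun j hj => by
        rw [hj0min j (Finset.mem_Ico.mp hj).2, zero_mul]
    rw [this, zero_add]
  rw [hsplit, Finset.sum_Ico_eq_sum_range] at key
  have hnj0 : n - j0 = m + 1 := by omega
  rw [hnj0] at key
  rw [Finset.sum_range_succ'] at key
  -- key : ∑ i ∈ range m, d (j0 + (i+1)) * x (t+n-1-(j0+(i+1))) + d (j0+0) * x (t+n-1-(j0+0)) = 0
  have harith : ∀ i, i ≤ m → t + n - 1 - (j0 + i) = t + m - i := by
    intro i hi; omega
  have key2 : d j0 * x (t + m) + ∑ i ∈ Finset.range m, d (j0 + (i + 1)) * x (t + m - (i + 1)) = 0 := by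
    have e0 : j0 + 0 = j0 := rfl
    rw [e0] at key
    have hc : ∑ i ∈ Finset.range m, d (j0 + (i + 1)) * x (t + n - 1 - (j0 + (i + 1))) =
        ∑ i ∈ Finset.range m, d (j0 + (i + 1)) * x (t + m - (i + 1)) :=
      Finset.sum_congr rfl fun i hi => by
        rw [harith (i + 1) (by have := Finset.mem_range.mp hi; omega)]
    rw [hc, show t + n - 1 - j0 = t + m from by omega] at key
    linarith [key]
  -- now solve for x (t + m)
  have hsum : ∑ j ∈ Finset.Icc 1 m, (-d (j0 + j) / d j0) * x (t + m - j) =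
      (∑ i ∈ Finset.range m, -(d (j0 + (i + 1)) * x (t + m - (i + 1)))) / d j0 := by
    rw [Finset.sum_div]
    rw [← Finset.Ico_add_one_right_eq_Icc, Finset.sum_Ico_eq_sum_range]
    refine Finset.sum_congr rfl fun i hi => ?_
    rw [add_comm 1 i]
    ring
  rw [hsum, eq_div_iff hj0]
  have : ∑ i ∈ Finset.range m, -(d (j0 + (i + 1)) * x (t + m - (i + 1))) =
      -∑ i ∈ Finset.range m, d (j0 + (i + 1)) * x (t + m - (i + 1)) := by
    rw [Finset.sum_neg_distrib]
  rw [this]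
  linarith [key2]
end
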